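/- Let A_i ∈ ℝ^{n×n}, B_i ∈ ℝ^{n×m}, C_i ∈ ℝ^{m×n} for i = 1,…,N, let a < 0 < b, and suppose there exists a symmetric positive definite P ∈ ℝ^{n×n} and matrices L_i, W_i such that for each i: P·A_i + A_iᵀ·P + C_iᵀ·C_i = −L_iᵀ·L_i, P·B_i − ((a+b)/2)·C_iᵀ = −L_iᵀ·W_i, and a·b·Id = −W_iᵀ·W_i. Let s : [0,∞) → ℝ^N be continuous with s_i(t) ≥ 0 and ∑_i s_i(t) = 1, and let x be a C¹ solution of ẋ = (∑_i s_i A_i)x + (∑_i s_i B_i)u with output y = (∑_i s_i C_i)x, where u is continuous. Then for V = (1/2)xᵀPx, the derivative satisfies V̇(t) ≤ −(1/2)∑_i s_i(t)·‖C_i x(t)‖² − (1/2)·a·b·‖u(t)‖² + ((a+b)/2)·y(t)ᵀ·u(t). -/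

import Mathlib

/-!
Since `P` is symmetric, `V̇ = xᵀ P ẋ`, and `ẋ` is affine in the scheduling weights, so
`2 V̇ = ∑ sᵢ · 2 xᵀ P (Aᵢ x + Bᵢ u)`. At each vertex the three LMI identities complete the square:
`2 xᵀ P (Aᵢ x + Bᵢ u) = -‖Cᵢ x‖² - ‖Lᵢ x + Wᵢ u‖² - a b ‖u‖² + (a + b) (Cᵢ x)ᵀ u`.
Dropping `‖Lᵢ x + Wᵢ u‖²` and averaging over the vertices (`∑ sᵢ = 1`, `y = ∑ sᵢ Cᵢ x`) gives the bound.
-/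

open Matrix

section

variable {R m n k : Type*} [CommRing R] [Fintype m] [Fintype n] [Fintype k]

theorem dotProduct_transpose_mul_mulVec (M : Matrix k n R) (M' : Matrix k m R)
    (v : n → R) (w : m → R) :
    v ⬝ᵥ (Mᵀ * M') *ᵥ w = (M *ᵥ v) ⬝ᵥ (M' *ᵥ w) := by
  rw [← mulVec_mulVec, dotProduct_mulVec, vecMul_transpose]

theorem two_mul_dotProduct_mulVec_mulVec_of_isSymm {P : Matrix n n R} (hP : P.IsSymm)
    (A : Matrix n n R) (v : n → R) :
    2 * (v ⬝ᵥ P *ᵥ (A *ᵥ v)) = v ⬝ᵥ (P * A + Aᵀ * P) *ᵥ v := by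
  rw [add_mulVec, dotProduct_add, dotProduct_transpose_mul_mulVec, ← mulVec_mulVec,
    dotProduct_mulVec v P, ← mulVec_transpose, hP.eq, dotProduct_comm]
  ring

theorem two_mul_dotProduct_mulVec_eq_of_lmi [DecidableEq m]
    {P A : Matrix n n R} {B : Matrix n m R} {C : Matrix m n R}
    {L : Matrix k n R} {W : Matrix k m R} {c d : R} (hP : P.IsSymm)
    (hA : P * A + Aᵀ * P + Cᵀ * C = -(Lᵀ * L))
    (hB : P * B - c • Cᵀ = -(Lᵀ * W))
    (hW : d • (1 : Matrix m m R) = -(Wᵀ * W)) (v : n → R) (w : m → R) :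
    2 * (v ⬝ᵥ P *ᵥ (A *ᵥ v + B *ᵥ w)) =
      -((C *ᵥ v) ⬝ᵥ (C *ᵥ v)) - (L *ᵥ v + W *ᵥ w) ⬝ᵥ (L *ᵥ v + W *ᵥ w)
        - d * (w ⬝ᵥ w) + 2 * c * ((C *ᵥ v) ⬝ᵥ w) := by
  have hPA : 2 * (v ⬝ᵥ P *ᵥ (A *ᵥ v)) = -((L *ᵥ v) ⬝ᵥ (L *ᵥ v)) - (C *ᵥ v) ⬝ᵥ (C *ᵥ v) := by
    rw [two_mul_dotProduct_mulVec_mulVec_of_isSymm hP, eq_sub_of_add_eq hA, sub_mulVec,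
      neg_mulVec, dotProduct_sub, dotProduct_neg, dotProduct_transpose_mul_mulVec,
      dotProduct_transpose_mul_mulVec]
  have hPB : v ⬝ᵥ P *ᵥ (B *ᵥ w) = c * ((C *ᵥ v) ⬝ᵥ w) - (L *ᵥ v) ⬝ᵥ (W *ᵥ w) := by
    rw [mulVec_mulVec, sub_eq_iff_eq_add.mp hB, neg_add_eq_sub, sub_mulVec, dotProduct_sub,
      smul_mulVec, dotProduct_smul, smul_eq_mul, dotProduct_mulVec, vecMul_transpose,
      dotProduct_transpose_mul_mulVec]
  have hWW : (W *ᵥ w) ⬝ᵥ (W *ᵥ w) = -d * (w ⬝ᵥ w) := by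
    rw [← dotProduct_transpose_mul_mulVec, ← neg_neg (Wᵀ * W), ← hW, neg_mulVec, smul_mulVec,
      one_mulVec, dotProduct_neg, dotProduct_smul, smul_eq_mul, neg_mul]
  rw [mulVec_add, dotProduct_add, mul_add, hPA, hPB]
  simp only [dotProduct_add, add_dotProduct, dotProduct_comm (W *ᵥ w) (L *ᵥ v)]
  linear_combination hWW

theorem two_mul_dotProduct_mulVec_le_of_lmi [DecidableEq m] [LinearOrder R] [IsStrictOrderedRing R]
    {P A : Matrix n n R} {B : Matrix n m R} {C : Matrix m n R}
    {L : Matrix k n R} {W : Matrix k m R} {c d : R} (hP : P.IsSymm)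
    (hA : P * A + Aᵀ * P + Cᵀ * C = -(Lᵀ * L))
    (hB : P * B - c • Cᵀ = -(Lᵀ * W))
    (hW : d • (1 : Matrix m m R) = -(Wᵀ * W)) (v : n → R) (w : m → R) :
    2 * (v ⬝ᵥ P *ᵥ (A *ᵥ v + B *ᵥ w)) ≤
      -((C *ᵥ v) ⬝ᵥ (C *ᵥ v)) - d * (w ⬝ᵥ w) + 2 * c * ((C *ᵥ v) ⬝ᵥ w) := by
  rw [two_mul_dotProduct_mulVec_eq_of_lmi hP hA hB hW]
  have hsq : 0 ≤ (L *ᵥ v + W *ᵥ w) ⬝ᵥ (L *ᵥ v + W *ᵥ w) :=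
    Finset.sum_nonneg fun i _ => mul_self_nonneg _
  linarith

end

theorem HasDerivAt.dotProduct {𝕜 ι : Type*} [NontriviallyNormedField 𝕜] [Fintype ι]
    {v w : 𝕜 → ι → 𝕜} {v' w' : ι → 𝕜} {t : 𝕜}
    (hv : HasDerivAt v v' t) (hw : HasDerivAt w w' t) :
    HasDerivAt (fun τ => v τ ⬝ᵥ w τ) (v' ⬝ᵥ w t + v t ⬝ᵥ w') t := by
  simp only [_root_.dotProduct, ← Finset.sum_add_distrib]
  exact HasDerivAt.fun_sum fun j _ => (hasDerivAt_pi.mp hv j).mul (hasDerivAt_pi.mp hw j)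

theorem HasDerivAt.mulVec {𝕜 ι κ : Type*} [NontriviallyNormedField 𝕜] [Fintype κ]
    (M : Matrix ι κ 𝕜) {v : 𝕜 → κ → 𝕜} {v' : κ → 𝕜} {t : 𝕜} (hv : HasDerivAt v v' t) :
    HasDerivAt (fun τ => M *ᵥ v τ) (M *ᵥ v') t :=
  hasDerivAt_pi.2 fun i =>
    ((hasDerivAt_const t (M i)).dotProduct hv).congr_deriv (by rw [zero_dotProduct, zero_add]; rfl)

theorem HasDerivAt.dotProduct_mulVec_self {𝕜 ι : Type*} [NontriviallyNormedField 𝕜] [Fintype ι]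
    {P : Matrix ι ι 𝕜} (hP : P.IsSymm) {x : 𝕜 → ι → 𝕜} {x' : ι → 𝕜} {t : 𝕜}
    (hx : HasDerivAt x x' t) :
    HasDerivAt (fun τ => x τ ⬝ᵥ P *ᵥ x τ) (2 * (x t ⬝ᵥ P *ᵥ x')) t :=
  (hx.dotProduct (hx.mulVec P)).congr_deriv <| by
    rw [dotProduct_mulVec x', ← mulVec_transpose, hP.eq, dotProduct_comm]
    ring

theorem EuclideanSpace.norm_equiv_symm_sq {ι : Type*} [Fintype ι] (v : ι → ℝ) :
    ‖(EuclideanSpace.equiv ι ℝ).symm v‖ ^ 2 = v ⬝ᵥ v := by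
  rw [← real_inner_self_eq_norm_sq]
  rfl

theorem statement_10_general {N n m : ℕ}
    (A : Fin N → Matrix (Fin n) (Fin n) ℝ)
    (B : Fin N → Matrix (Fin n) (Fin m) ℝ)
    (C : Fin N → Matrix (Fin m) (Fin n) ℝ)
    (a b : ℝ)
    (P : Matrix (Fin n) (Fin n) ℝ) (hP : P.PosDef)
    {k : ℕ} (L : Fin N → Matrix (Fin k) (Fin n) ℝ)
    (W : Fin N → Matrix (Fin k) (Fin m) ℝ)
    (h1 : ∀ i, P * A i + (A i)ᵀ * P + (C i)ᵀ * C i = -((L i)ᵀ * L i))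
    (h2 : ∀ i, P * B i - ((a + b) / 2) • (C i)ᵀ = -((L i)ᵀ * W i))
    (h3 : ∀ i, (a * b) • (1 : Matrix (Fin m) (Fin m) ℝ) = -((W i)ᵀ * W i))
    (s : ℝ → (Fin N → ℝ))
    (hs_nonneg : ∀ t i, 0 ≤ s t i) (hs_sum : ∀ t, ∑ i, s t i = 1)
    (x : ℝ → (Fin n → ℝ)) (u : ℝ → (Fin m → ℝ))
    (hx : ∀ t, HasDerivAt x
      ((∑ i, s t i • A i) *ᵥ x t + (∑ i, s t i • B i) *ᵥ u t) t)
    (y : ℝ → (Fin m → ℝ)) (hy : ∀ t, y t = (∑ i, s t i • C i) *ᵥ x t) (t : ℝ) :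
    deriv (fun τ => (1 / 2) * (x τ ⬝ᵥ P *ᵥ x τ)) t ≤
      -(1 / 2) * ∑ i, s t i * ‖(EuclideanSpace.equiv (Fin m) ℝ).symm (C i *ᵥ x t)‖ ^ 2
        - (1 / 2) * (a * b) * ‖(EuclideanSpace.equiv (Fin m) ℝ).symm (u t)‖ ^ 2
        + ((a + b) / 2) * (y t ⬝ᵥ u t) := by
  have hPs : P.IsSymm := isHermitian_iff_isSymm.mp hP.isHermitian
  have hV := ((hx t).dotProduct_mulVec_self hPs).const_mul (1 / 2)
  have hvertex i := two_mul_dotProduct_mulVec_le_of_lmi hPs (h1 i) (h2 i) (h3 i) (x t) (u t)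
  simp only [sum_mulVec, smul_mulVec, ← Finset.sum_add_distrib, ← smul_add, mulVec_sum,
    dotProduct_sum, mulVec_smul, dotProduct_smul, smul_eq_mul] at hV
  rw [hV.deriv, hy t]
  simp only [EuclideanSpace.norm_equiv_symm_sq, sum_mulVec, smul_mulVec, sum_dotProduct,
    smul_dotProduct, smul_eq_mul]
  calc 1 / 2 * (2 * ∑ i, s t i * (x t ⬝ᵥ P *ᵥ (A i *ᵥ x t + B i *ᵥ u t)))
      = 1 / 2 * ∑ i, s t i * (2 * (x t ⬝ᵥ P *ᵥ (A i *ᵥ x t + B i *ᵥ u t))) := by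
        rw [Finset.mul_sum]; simp only [mul_left_comm (2 : ℝ)]
    _ ≤ 1 / 2 * ∑ i, s t i * (-((C i *ᵥ x t) ⬝ᵥ (C i *ᵥ x t)) - a * b * (u t ⬝ᵥ u t)
          + 2 * ((a + b) / 2) * ((C i *ᵥ x t) ⬝ᵥ u t)) := by
        gcongr with i
        exacts [hs_nonneg t i, hvertex i]
    _ = _ := by
        simp only [mul_add, mul_sub, Finset.sum_add_distrib, Finset.sum_sub_distrib,
          ← Finset.sum_mul, hs_sum, mul_neg, Finset.sum_neg_distrib, mul_left_comm (s t _),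
          ← Finset.mul_sum]
        ring

/-- Pointwise dissipation inequality for the polytopic conic-sector LMI. -/
theorem statement_10 {N n m : ℕ}
    (A : Fin N → Matrix (Fin n) (Fin n) ℝ)
    (B : Fin N → Matrix (Fin n) (Fin m) ℝ)
    (C : Fin N → Matrix (Fin m) (Fin n) ℝ)
    (a b : ℝ) (ha : a < 0) (hb : 0 < b)
    (P : Matrix (Fin n) (Fin n) ℝ) (hP : P.PosDef)
    {k : ℕ} (L : Fin N → Matrix (Fin k) (Fin n) ℝ)
    (W : Fin N → Matrix (Fin k) (Fin m) ℝ)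
    (h1 : ∀ i, P * A i + (A i)ᵀ * P + (C i)ᵀ * C i = -((L i)ᵀ * L i))
    (h2 : ∀ i, P * B i - ((a + b) / 2) • (C i)ᵀ = -((L i)ᵀ * W i))
    (h3 : ∀ i, (a * b) • (1 : Matrix (Fin m) (Fin m) ℝ) = -((W i)ᵀ * W i))
    (s : ℝ → (Fin N → ℝ)) (hs_cont : Continuous s)
    (hs_nonneg : ∀ t i, 0 ≤ s t i) (hs_sum : ∀ t, ∑ i, s t i = 1)
    (x : ℝ → (Fin n → ℝ)) (u : ℝ → (Fin m → ℝ)) (hu : Continuous u)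
    (hx : ∀ t, HasDerivAt x
      ((∑ i, s t i • A i) *ᵥ x t + (∑ i, s t i • B i) *ᵥ u t) t)
    (y : ℝ → (Fin m → ℝ)) (hy : ∀ t, y t = (∑ i, s t i • C i) *ᵥ x t) (t : ℝ) :
    deriv (fun τ => (1 / 2) * (x τ ⬝ᵥ P *ᵥ x τ)) t ≤
      -(1 / 2) * ∑ i, s t i * ‖(EuclideanSpace.equiv (Fin m) ℝ).symm (C i *ᵥ x t)‖ ^ 2
        - (1 / 2) * (a * b) * ‖(EuclideanSpace.equiv (Fin m) ℝ).symm (u t)‖ ^ 2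
        + ((a + b) / 2) * (y t ⬝ᵥ u t) :=
  statement_10_general A B C a b P hP L W h1 h2 h3 s hs_nonneg hs_sum x u hx y hy t
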